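/- Suppose A₁, A₂ are square matrices satisfying ‖A_i^k‖ ≤ τρ^k for all k ≥ 0 (τ ≥ 1, ρ ∈ (0,1)), and Q₁, Q₂ are positive semidefinite. Let P_i = dlyap(A_i, Q_i). Then ‖P₁ − P₂‖ ≤ (τ²/(1−ρ²)) ‖Q₁−Q₂‖ + (τ⁴/(1−ρ²)²) ‖A₁−A₂‖ (‖A₁‖+‖A₂‖) ‖Q₂‖. -/

import Mathlib

/-! The difference `P₁ - P₂` solves the Lyapunov equation of `A₁` with right-hand side
`(Q₁ - Q₂) + (A₁ᵀ P₂ A₁ - A₂ᵀ P₂ A₂)`. A Lyapunov sum of a matrix whose powers decay like `τ ρ^k`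
is at most `τ² / (1 - ρ²)` times its right-hand side, and the second summand is at most
`‖A₁ - A₂‖ (‖A₁‖ + ‖A₂‖) ‖P₂‖` with `‖P₂‖ ≤ τ² / (1 - ρ²) ‖Q₂‖`. -/

open Matrix MeasureTheory ProbabilityTheory
open scoped Classical RealInnerProductSpace

/-- Operator (spectral) norm of a real matrix. -/
noncomputable def opNorm {m n : Type*} [Fintype m] [Fintype n] [DecidableEq n]
    (A : Matrix m n ℝ) : ℝ :=
  ‖LinearMap.toContinuousLinearMap (Matrix.toEuclideanLin A)‖

/-- Frobenius norm of a real matrix. -/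
noncomputable def frob {m n : Type*} [Fintype m] [Fintype n] (A : Matrix m n ℝ) : ℝ :=
  Real.sqrt (∑ i, ∑ j, (A i j) ^ 2)

/-- Positive semidefinite square root (junk value `0` off the PSD matrices). -/
noncomputable def sqrtPD {n : Type*} [Fintype n] [DecidableEq n]
    (A : Matrix n n ℝ) : Matrix n n ℝ :=
  if h : A.PosSemidef then
    (h.1.eigenvectorUnitary : Matrix n n ℝ) * Matrix.diagonal ((↑) ∘ Real.sqrt ∘ h.1.eigenvalues) *
      (star h.1.eigenvectorUnitary : Matrix n n ℝ)
  else 0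

/-- Matrix logarithm of a hermitian matrix via the spectral theorem
(junk value `0` off the hermitian matrices). -/
noncomputable def mlog {n : Type*} [Fintype n] [DecidableEq n]
    (A : Matrix n n ℝ) : Matrix n n ℝ :=
  if h : A.IsHermitian then
    (h.eigenvectorUnitary : Matrix n n ℝ) * Matrix.diagonal (Real.log ∘ h.eigenvalues) *
      (star (h.eigenvectorUnitary : Matrix n n ℝ))
  else 0

/-- Thompson (invariant) metric `δ∞(A,B) = ‖log (A^{-1/2} B A^{-1/2})‖`. -/
noncomputable def thompson {n : Type*} [Fintype n] [DecidableEq n]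
    (A B : Matrix n n ℝ) : ℝ :=
  opNorm (mlog ((sqrtPD A)⁻¹ * B * (sqrtPD A)⁻¹))

/-- Largest (real) eigenvalue. -/
noncomputable def lamMax {n : Type*} [Fintype n] [DecidableEq n] (A : Matrix n n ℝ) : ℝ :=
  sSup (spectrum ℝ A)

/-- Smallest (real) eigenvalue. -/
noncomputable def lamMin {n : Type*} [Fintype n] [DecidableEq n] (A : Matrix n n ℝ) : ℝ :=
  sInf (spectrum ℝ A)

/-- Solution `P = Σ_{k≥0} (Lᵀ)^k M L^k` of the discrete Lyapunov equation `P = Lᵀ P L + M`. -/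
noncomputable def dlyap {n : Type*} [Fintype n] [DecidableEq n]
    (L M : Matrix n n ℝ) : Matrix n n ℝ :=
  ∑' k : ℕ, (L ^ k)ᵀ * M * (L ^ k)

/-- `K` stabilizes `(A,B)`: the closed loop matrix `A + BK` has spectral radius `< 1`. -/
def Stabilizes {n d : Type*} [Fintype n] [DecidableEq n] [Fintype d]
    (A : Matrix n n ℝ) (B : Matrix n d ℝ) (K : Matrix d n ℝ) : Prop :=
  ∀ z ∈ spectrum ℂ ((A + B * K).map ((↑) : ℝ → ℂ)), ‖z‖ < 1

section LyapunovSum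

variable {R : Type*} [NormedRing R] [StarRing R] [NormedStarGroup R]

noncomputable def lyapunovSum (a x : R) : R :=
  ∑' k : ℕ, star (a ^ k) * x * a ^ k

lemma norm_star_mul_mul_sub_star_mul_mul_le (a b p : R) :
    ‖star a * p * a - star b * p * b‖ ≤ ‖a - b‖ * (‖a‖ + ‖b‖) * ‖p‖ := by
  have hsplit : star a * p * a - star b * p * b = star a * p * (a - b) + star (a - b) * p * b := by
    simp only [star_sub]; noncomm_ring
  calc ‖star a * p * a - star b * p * b‖
      ≤ ‖star a‖ * ‖p‖ * ‖a - b‖ + ‖star (a - b)‖ * ‖p‖ * ‖b‖ :=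
        hsplit ▸ (norm_add_le _ _).trans (add_le_add norm_mul₃_le norm_mul₃_le)
    _ = ‖a - b‖ * (‖a‖ + ‖b‖) * ‖p‖ := by simp only [norm_star]; ring

lemma hasSum_mul_sq_geometric {ρ : ℝ} (hρ : |ρ| < 1) (C : ℝ) :
    HasSum (fun k : ℕ => C * (ρ ^ 2) ^ k) (C / (1 - ρ ^ 2)) := by
  simpa only [div_eq_mul_inv] using
    (hasSum_geometric_of_lt_one (sq_nonneg ρ) ((sq_lt_one_iff_abs_lt_one ρ).2 hρ)).mul_left C

variable {a : R} {τ ρ : ℝ}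

lemma norm_star_pow_mul_mul_pow_le (ha : ∀ k : ℕ, ‖a ^ k‖ ≤ τ * ρ ^ k) (x : R) (k : ℕ) :
    ‖star (a ^ k) * x * a ^ k‖ ≤ τ ^ 2 * ‖x‖ * (ρ ^ 2) ^ k :=
  calc ‖star (a ^ k) * x * a ^ k‖ ≤ ‖a ^ k‖ * ‖x‖ * ‖a ^ k‖ := by
        simpa only [norm_star] using norm_mul₃_le (a := star (a ^ k)) (b := x) (c := a ^ k)
    _ ≤ (τ * ρ ^ k) * ‖x‖ * (τ * ρ ^ k) := by
        have hbound_nonneg := (norm_nonneg _).trans (ha k)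
        gcongr <;> exact ha k
    _ = τ ^ 2 * ‖x‖ * (ρ ^ 2) ^ k := by ring

lemma norm_lyapunovSum_le (hρ : |ρ| < 1) (ha : ∀ k : ℕ, ‖a ^ k‖ ≤ τ * ρ ^ k) (x : R) :
    ‖lyapunovSum a x‖ ≤ τ ^ 2 / (1 - ρ ^ 2) * ‖x‖ := by
  refine (tsum_of_norm_bounded (hasSum_mul_sq_geometric hρ _)
    (norm_star_pow_mul_mul_pow_le ha x)).trans_eq ?_
  ring

variable [CompleteSpace R]

lemma summable_star_pow_mul_mul_pow (hρ : |ρ| < 1) (ha : ∀ k : ℕ, ‖a ^ k‖ ≤ τ * ρ ^ k) (x : R) :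
    Summable fun k : ℕ => star (a ^ k) * x * a ^ k :=
  .of_norm_bounded (hasSum_mul_sq_geometric hρ _).summable (norm_star_pow_mul_mul_pow_le ha x)

section

variable (hρ : |ρ| < 1) (ha : ∀ k : ℕ, ‖a ^ k‖ ≤ τ * ρ ^ k)
include hρ ha

lemma lyapunovSum_sub (x y : R) : lyapunovSum a (x - y) = lyapunovSum a x - lyapunovSum a y := by
  simp only [lyapunovSum, mul_sub, sub_mul]
  exact (summable_star_pow_mul_mul_pow hρ ha x).tsum_sub (summable_star_pow_mul_mul_pow hρ ha y)

lemma lyapunovSum_eq_add_lyapunovSum_star_mul_mul (x : R) :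
    lyapunovSum a x = x + lyapunovSum a (star a * x * a) := by
  rw [lyapunovSum, (summable_star_pow_mul_mul_pow hρ ha x).tsum_eq_zero_add, lyapunovSum]
  simp only [pow_zero, star_one, one_mul, mul_one, pow_succ', star_mul, mul_assoc]

lemma lyapunovSum_eq_add_star_mul_mul (x : R) :
    lyapunovSum a x = x + star a * lyapunovSum a x * a := by
  have hs := summable_star_pow_mul_mul_pow hρ ha x
  calc lyapunovSum a x = x + ∑' k : ℕ, star a * (star (a ^ k) * x * a ^ k) * a := by
        rw [lyapunovSum, hs.tsum_eq_zero_add]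
        simp only [pow_zero, star_one, one_mul, mul_one, pow_succ, star_mul, mul_assoc]
    _ = x + star a * lyapunovSum a x * a := by
        rw [(hs.mul_left (star a)).tsum_mul_right, hs.tsum_mul_left, lyapunovSum]

lemma lyapunovSum_sub_star_mul_mul (x : R) : lyapunovSum a (x - star a * x * a) = x := by
  rw [lyapunovSum_sub hρ ha, lyapunovSum_eq_add_lyapunovSum_star_mul_mul hρ ha x,
    add_sub_cancel_right]

end

theorem norm_lyapunovSum_sub_le {b : R} (hρ : |ρ| < 1)
    (ha : ∀ k : ℕ, ‖a ^ k‖ ≤ τ * ρ ^ k) (hb : ∀ k : ℕ, ‖b ^ k‖ ≤ τ * ρ ^ k) (q₁ q₂ : R) :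
    ‖lyapunovSum a q₁ - lyapunovSum b q₂‖ ≤
      τ ^ 2 / (1 - ρ ^ 2) * ‖q₁ - q₂‖ +
        τ ^ 4 / (1 - ρ ^ 2) ^ 2 * ‖a - b‖ * (‖a‖ + ‖b‖) * ‖q₂‖ := by
  set p₂ := lyapunovSum b q₂
  have hq₂ : q₂ = p₂ - star b * p₂ * b :=
    eq_sub_of_add_eq (lyapunovSum_eq_add_star_mul_mul hρ hb q₂).symm
  have hdiff : lyapunovSum a q₁ - p₂ =
      lyapunovSum a (q₁ - q₂ + (star a * p₂ * a - star b * p₂ * b)) := by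
    conv_lhs => rw [← lyapunovSum_sub_star_mul_mul hρ ha p₂, ← lyapunovSum_sub hρ ha]
    rw [hq₂]
    congr 1
    abel
  have hC : 0 ≤ τ ^ 2 / (1 - ρ ^ 2) :=
    div_nonneg (sq_nonneg τ) (sub_nonneg.2 ((sq_lt_one_iff_abs_lt_one ρ).2 hρ).le)
  calc ‖lyapunovSum a q₁ - p₂‖
      ≤ τ ^ 2 / (1 - ρ ^ 2) * ‖q₁ - q₂ + (star a * p₂ * a - star b * p₂ * b)‖ :=
        hdiff ▸ norm_lyapunovSum_le hρ ha _
    _ ≤ τ ^ 2 / (1 - ρ ^ 2) *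
          (‖q₁ - q₂‖ + ‖a - b‖ * (‖a‖ + ‖b‖) * (τ ^ 2 / (1 - ρ ^ 2) * ‖q₂‖)) := by
        gcongr
        refine (norm_add_le _ _).trans (add_le_add le_rfl ?_)
        refine (norm_star_mul_mul_sub_star_mul_mul_le a b p₂).trans ?_
        gcongr
        exact norm_lyapunovSum_le hρ hb q₂
    _ = τ ^ 2 / (1 - ρ ^ 2) * ‖q₁ - q₂‖ +
          τ ^ 4 / (1 - ρ ^ 2) ^ 2 * ‖a - b‖ * (‖a‖ + ‖b‖) * ‖q₂‖ := by
        rw [show τ ^ 4 = (τ ^ 2) ^ 2 by ring, ← div_pow]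
        ring

end LyapunovSum

section

open scoped Matrix.Norms.L2Operator

variable {m ι : Type*} [Fintype m] [Fintype ι] [DecidableEq ι]

lemma opNorm_eq_l2_opNorm (A : Matrix m ι ℝ) : opNorm A = ‖A‖ := rfl

lemma dlyap_eq_lyapunovSum (A Q : Matrix ι ι ℝ) : dlyap A Q = lyapunovSum A Q := by
  simp only [dlyap, lyapunovSum, star_eq_conjTranspose, conjTranspose_eq_transpose_of_trivial]

end

theorem dlyap_perturbation_general {n : ℕ} (A₁ A₂ Q₁ Q₂ : Matrix (Fin n) (Fin n) ℝ)
    (τ ρ : ℝ) (hρ : ρ ∈ Set.Ioo (0 : ℝ) 1)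
    (hA₁ : ∀ k : ℕ, opNorm (A₁ ^ k) ≤ τ * ρ ^ k)
    (hA₂ : ∀ k : ℕ, opNorm (A₂ ^ k) ≤ τ * ρ ^ k) :
    opNorm (dlyap A₁ Q₁ - dlyap A₂ Q₂) ≤
      τ ^ 2 / (1 - ρ ^ 2) * opNorm (Q₁ - Q₂) +
        τ ^ 4 / (1 - ρ ^ 2) ^ 2 * opNorm (A₁ - A₂) * (opNorm A₁ + opNorm A₂) * opNorm Q₂ := by
  simp only [opNorm_eq_l2_opNorm, dlyap_eq_lyapunovSum] at hA₁ hA₂ ⊢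
  open scoped Matrix.Norms.L2Operator in
  exact norm_lyapunovSum_sub_le (abs_lt.2 ⟨by linarith [hρ.1], hρ.2⟩) hA₁ hA₂ Q₁ Q₂

/-- Perturbation bound for solutions of discrete Lyapunov equations. -/
theorem dlyap_perturbation {n : ℕ} (A₁ A₂ Q₁ Q₂ : Matrix (Fin n) (Fin n) ℝ)
    (hQ₁ : Q₁.PosSemidef) (hQ₂ : Q₂.PosSemidef)
    (τ ρ : ℝ) (hτ : 1 ≤ τ) (hρ : ρ ∈ Set.Ioo (0 : ℝ) 1)
    (hA₁ : ∀ k : ℕ, opNorm (A₁ ^ k) ≤ τ * ρ ^ k)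
    (hA₂ : ∀ k : ℕ, opNorm (A₂ ^ k) ≤ τ * ρ ^ k) :
    opNorm (dlyap A₁ Q₁ - dlyap A₂ Q₂) ≤
      τ ^ 2 / (1 - ρ ^ 2) * opNorm (Q₁ - Q₂) +
        τ ^ 4 / (1 - ρ ^ 2) ^ 2 * opNorm (A₁ - A₂) * (opNorm A₁ + opNorm A₂) * opNorm Q₂ :=
  dlyap_perturbation_general A₁ A₂ Q₁ Q₂ τ ρ hρ hA₁ hA₂
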